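/- For every positive integer r, there exist rational numbers e_{r+1}, e_{r+2}, ..., e_{2r} such that for every natural number n, S_{2r+2}(n) = ((r+1)(r+2)/(2r+3)) * (S_r(n) * S_{r+1}(n) - \sum_{i=r+1}^{2r} e_i * S_i(n)). -/
import Mathlib


/-- `S k n = ∑_{m=1}^n m^k` as a rational number. -/
def S (k n : ℕ) : ℚ := ∑ m ∈ Finset.Icc 1 n, (m : ℚ) ^ k

lemma S_succ (k n : ℕ) : S k (n+1) = S k n + ((n:ℚ)+1)^k := by
  rw [S, S, Finset.sum_Icc_succ_top (Nat.le_add_left 1 n)]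
  push_cast
  ring

lemma telescope (a b n : ℕ) :
    S a n * S b n = ∑ m ∈ Finset.Icc 1 n,
      ((m:ℚ)^a * S b m + (m:ℚ)^b * S a m - (m:ℚ)^(a+b)) := by
  induction n with
  | zero => simp [S]
  | succ n ih =>
    rw [Finset.sum_Icc_succ_top (Nat.le_add_left 1 n), ← ih, S_succ, S_succ]
    push_cast
    ring

lemma faulhaber' (k : ℕ) (hk : 1 ≤ k) :
    ∃ c : ℕ → ℚ, c 0 = 0 ∧ c (k+1) = 1/((k:ℚ)+1) ∧ c k = 1/2 ∧
      ∀ n : ℕ, S k n = ∑ j ∈ Finset.Icc 1 (k+1), c j * (n:ℚ)^j := by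
  refine ⟨fun j => if j = 0 then 0 else
      bernoulli' (k+1-j) * ((k+1).choose (k+1-j)) / ((k:ℚ)+1), rfl, ?_, ?_, ?_⟩
  · simp [Nat.sub_self]
  · have h1 : k + 1 - k = 1 := by omega
    have hk0 : k ≠ 0 := by omega
    simp only [hk0, if_false, h1, bernoulli'_one, Nat.choose_one_right]
    have : ((k:ℚ)+1) ≠ 0 := by positivity
    push_cast
    field_simp
  · intro n
    have := sum_Ico_pow n k
    rw [S, show Finset.Icc 1 n = Finset.Ico 1 (n+1) from rfl, this]
    refine Finset.sum_nbij' (i := fun i => k + 1 - i) (j := fun j => k + 1 - j)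
      ?_ ?_ ?_ ?_ ?_
    · intro a ha
      simp only [Finset.mem_range] at ha
      simp only [Finset.mem_Icc]
      omega
    · intro a ha
      simp only [Finset.mem_Icc] at ha
      simp only [Finset.mem_range]
      omega
    · intro a ha; simp only [Finset.mem_range] at ha; omega
    · intro a ha; simp only [Finset.mem_Icc] at ha; omega
    · intro a ha
      simp only [Finset.mem_range] at ha
      have h1 : k + 1 - a ≠ 0 := by omega
      have h2 : k + 1 - (k + 1 - a) = a := by omega
      simp only [h1, if_false, h2]
      ring

lemma sum_pow_mul (a k n : ℕ) (c : ℕ → ℚ)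
    (hS : ∀ m : ℕ, S k m = ∑ j ∈ Finset.Icc 1 (k+1), c j * (m:ℚ)^j) :
    ∑ m ∈ Finset.Icc 1 n, (m:ℚ)^a * S k m
      = ∑ j ∈ Finset.Icc 1 (k+1), c j * S (a+j) n := by
  simp_rw [hS, Finset.mul_sum]
  rw [Finset.sum_comm]
  refine Finset.sum_congr rfl fun j _ => ?_
  rw [S, Finset.mul_sum]
  refine Finset.sum_congr rfl fun m _ => ?_
  rw [pow_add]; ring

lemma reindex (a N : ℕ) (g : ℕ → ℚ) :
    ∑ j ∈ Finset.Icc 1 N, g j = ∑ i ∈ Finset.Icc (a+1) (a+N), g (i - a) := by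
  refine Finset.sum_nbij' (i := fun j => a + j) (j := fun i => i - a) ?_ ?_ ?_ ?_ ?_
  · intro x hx; simp only [Finset.mem_Icc] at *; omega
  · intro x hx; simp only [Finset.mem_Icc] at *; omega
  · intro x hx; simp only [Finset.mem_Icc] at hx; omega
  · intro x hx; simp only [Finset.mem_Icc] at hx; omega
  · intro x hx; simp only [Finset.mem_Icc] at hx
    simp only [Nat.add_sub_cancel_left]

theorem even_power_sum_recursion (r : ℕ) (hr : 0 < r) :
    ∃ e : ℕ → ℚ, ∀ n : ℕ,
      S (2 * r + 2) n =
        ((r : ℚ) + 1) * ((r : ℚ) + 2) / (2 * (r : ℚ) + 3) *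
          (S r n * S (r + 1) n - ∑ i ∈ Finset.Icc (r + 1) (2 * r), e i * S i n) := by
  obtain ⟨c', hc'0, hc'top, hc'sec, hc'⟩ := faulhaber' (r+1) (by omega)
  obtain ⟨c, hc0, hctop, hcsec, hc⟩ := faulhaber' r hr
  refine ⟨fun i => c' (i - r) + c (i - r - 1), fun n => ?_⟩
  -- step 1: telescoping + Faulhaber
  have key : S r n * S (r+1) n
      = (∑ j ∈ Finset.Icc 1 (r+1+1), c' j * S (r+j) n)
      + (∑ j ∈ Finset.Icc 1 (r+1), c j * S (r+1+j) n)
      - S (2*r+1) n := by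
    rw [telescope]
    have : ∀ m ∈ Finset.Icc 1 n,
        (m:ℚ)^r * S (r+1) m + (m:ℚ)^(r+1) * S r m - (m:ℚ)^(r+(r+1))
        = (m:ℚ)^r * S (r+1) m + ((m:ℚ)^(r+1) * S r m - (m:ℚ)^(2*r+1)) := by
      intro m _
      rw [show r + (r+1) = 2*r+1 by ring]
      ring
    rw [Finset.sum_congr rfl this, Finset.sum_add_distrib, Finset.sum_sub_distrib,
      sum_pow_mul r (r+1) n c' hc', sum_pow_mul (r+1) r n c hc]
    rw [S]
    ring
  -- step 2: reindex the two sums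
  have hA : (∑ j ∈ Finset.Icc 1 (r+1+1), c' j * S (r+j) n)
      = c' (r+2) * S (2*r+2) n + c' (r+1) * S (2*r+1) n
        + ∑ i ∈ Finset.Icc (r+1) (2*r), c' (i-r) * S i n := by
    rw [reindex r (r+1+1) (fun j => c' j * S (r+j) n)]
    rw [show r + (r+1+1) = 2*r+1+1 by omega, Finset.sum_Icc_succ_top (by omega),
      show (2*r+1 : ℕ) = 2*r+1 from rfl, Finset.sum_Icc_succ_top (by omega)]
    have e1 : 2*r+1+1-r = r+2 := by omega
    have e2 : 2*r+1-r = r+1 := by omega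
    have e3 : r + (2*r+1+1-r) = 2*r+2 := by omega
    have e4 : r + (2*r+1-r) = 2*r+1 := by omega
    rw [e3, e4, e1, e2]
    have : ∀ i ∈ Finset.Icc (r+1) (2*r), c' (i-r) * S (r+(i-r)) n = c' (i-r) * S i n := by
      intro i hi
      simp only [Finset.mem_Icc] at hi
      rw [show r + (i-r) = i by omega]
    rw [Finset.sum_congr rfl this]
    ring
  have hB : (∑ j ∈ Finset.Icc 1 (r+1), c j * S (r+1+j) n)
      = c (r+1) * S (2*r+2) n + c r * S (2*r+1) n
        + ∑ i ∈ Finset.Icc (r+1) (2*r), c (i-r-1) * S i n := by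
    rw [reindex (r+1) (r+1) (fun j => c j * S (r+1+j) n)]
    rw [show r+1 + (r+1) = 2*r+1+1 by omega,
      Finset.sum_Icc_succ_top (show r+1+1 ≤ 2*r+1+1 by omega),
      Finset.sum_Icc_succ_top (show r+1+1 ≤ 2*r+1 by omega)]
    have e1 : 2*r+1+1-(r+1) = r+1 := by omega
    have e2 : 2*r+1-(r+1) = r := by omega
    have e3 : r+1 + (2*r+1+1-(r+1)) = 2*r+2 := by omega
    have e4 : r+1 + (2*r+1-(r+1)) = 2*r+1 := by omega
    rw [e3, e4, e1, e2]
    have hsub : ∑ i ∈ Finset.Icc (r+1+1) (2*r), c (i-(r+1)) * S (r+1+(i-(r+1))) n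
        = ∑ i ∈ Finset.Icc (r+1) (2*r), c (i-r-1) * S i n := by
      have h1 : Finset.Icc (r+1+1) (2*r) ⊆ Finset.Icc (r+1) (2*r) := by
        apply Finset.Icc_subset_Icc (by omega) le_rfl
      have h2 : ∀ x ∈ Finset.Icc (r+1) (2*r), x ∉ Finset.Icc (r+1+1) (2*r) →
          c (x-(r+1)) * S (r+1+(x-(r+1))) n = 0 := by
        intro x hx hnx
        simp only [Finset.mem_Icc] at hx hnx
        have hx1 : x = r + 1 := by omega
        subst hx1
        rw [show r + 1 - (r+1) = 0 by omega, hc0]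
        ring
      rw [Finset.sum_subset h1 h2]
      refine Finset.sum_congr rfl fun i hi => ?_
      simp only [Finset.mem_Icc] at hi
      rw [show r+1 + (i-(r+1)) = i by omega, show i - (r+1) = i - r - 1 by omega]
    rw [hsub]
    ring
  -- step 3: combine
  have hr1 : ((r:ℚ)+1) ≠ 0 := by positivity
  have hr2 : ((r:ℚ)+2) ≠ 0 := by positivity
  have hr3 : (2*(r:ℚ)+3) ≠ 0 := by positivity
  have hc'top' : c' (r+2) = 1/((r:ℚ)+2) := by
    rw [show r+2 = (r+1)+1 from rfl, hc'top]
    push_cast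
    ring
  have key2 : S r n * S (r+1) n
      = (2*(r:ℚ)+3)/(((r:ℚ)+1)*((r:ℚ)+2)) * S (2*r+2) n
        + ∑ i ∈ Finset.Icc (r+1) (2*r), (c' (i-r) + c (i-r-1)) * S i n := by
    rw [key, hA, hB, hc'top', hctop, hc'sec, hcsec]
    simp_rw [add_mul]
    rw [Finset.sum_add_distrib]
    field_simp
    ring
  rw [key2]
  have hsum : ∑ i ∈ Finset.Icc (r+1) (2*r),
      (fun i => c' (i - r) + c (i - r - 1)) i * S i n
      = ∑ i ∈ Finset.Icc (r+1) (2*r), (c' (i-r) + c (i-r-1)) * S i n := rfl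
  rw [hsum]
  field_simp
  ring
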